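/- arXiv:2507.23557 — 2 statements merged into one kernel-verified Lean document; each statement's English description precedes it below -/
import Mathlib

section
/- For every integer s ≥ 1, one has A_s = (2/π) · ∫_0^1 √((1−t)/t) · (2/(1+√(1−t)))^s dt, where A_s = ∑_{(m₁,…,m_s) ∈ ℕ^s} Cat_{m₁} ⋯ Cat_{m_s} · Cat_{m₁+⋯+m_s} · 16^{−(m₁+⋯+m_s)}. -/
/-!
Expanding `Cat_n = (2/π) 4ⁿ ∫₀¹ tⁿ √((1-t)/t) dt` (a Beta integral) for the factor
`Cat_{m₁+⋯+m_s}` turns each summand of `A_s` into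
`(2/π) ∫₀¹ √((1-t)/t) ∏ᵢ Cat_{mᵢ} (t/4)^{mᵢ} dt`. All terms are nonnegative, so sum and integral
commute, and the sum over `m ∈ ℕ^s` factors into the `s`-th power of the Catalan generating function
`∑ Cat_n xⁿ = 2/(1+√(1-4x))` at `x = t/4`.
-/

open Real

/-- The star sum `A_s = ∑_{m ∈ ℕ^s} Cat_{m₁}⋯Cat_{m_s} · Cat_{m₁+⋯+m_s} · 16^{−(m₁+⋯+m_s)}`. -/
noncomputable def starSum (s : ℕ) : ℝ :=
  ∑' m : Fin s → ℕ,
    (∏ i, (catalan (m i) : ℝ)) * (catalan (∑ i, m i) : ℝ) * ((16 : ℝ) ^ (∑ i, m i))⁻¹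

open MeasureTheory

theorem succ_succ_mul_catalan_succ (n : ℕ) :
    (n + 2) * catalan (n + 1) = 2 * (2 * n + 1) * catalan n := by
  have h := Nat.succ_mul_centralBinom_succ n
  rw [← succ_mul_catalan_eq_centralBinom, ← succ_mul_catalan_eq_centralBinom] at h
  refine Nat.eq_of_mul_eq_mul_left (Nat.succ_pos n) ?_
  linarith

theorem catalan_pos (n : ℕ) : 0 < catalan n :=
  Nat.pos_of_mul_pos_left ((succ_mul_catalan_eq_centralBinom n).symm ▸ n.centralBinom_pos)

theorem sum_range_catalan_mul_quarter_pow (N : ℕ) :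
    ∑ n ∈ Finset.range N, (catalan n : ℝ) * (1 / 4) ^ n
      = 2 - 2 * (N + 1) * catalan N * (1 / 4) ^ N := by
  induction N with
  | zero => norm_num
  | succ N ih =>
    have h : ((N : ℝ) + 2) * catalan (N + 1) = 2 * (2 * N + 1) * catalan N := by
      exact_mod_cast succ_succ_mul_catalan_succ N
    rw [Finset.sum_range_succ, ih, pow_succ]
    push_cast
    linear_combination ((1 / 4 : ℝ) ^ N / 2) * h

theorem sum_range_catalan_mul_pow_le_two {x : ℝ} (hx₀ : 0 ≤ x) (hx : x ≤ 1 / 4) (N : ℕ) :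
    ∑ n ∈ Finset.range N, (catalan n : ℝ) * x ^ n ≤ 2 :=
  calc ∑ n ∈ Finset.range N, (catalan n : ℝ) * x ^ n
      ≤ ∑ n ∈ Finset.range N, (catalan n : ℝ) * (1 / 4) ^ n := by
        gcongr
    _ ≤ 2 := by
        rw [sum_range_catalan_mul_quarter_pow]
        have : 0 ≤ 2 * ((N : ℝ) + 1) * catalan N * (1 / 4) ^ N := by positivity
        linarith

theorem hasSum_catalan_mul_pow {x : ℝ} (hx₀ : 0 ≤ x) (hx : x ≤ 1 / 4) :
    HasSum (fun n ↦ (catalan n : ℝ) * x ^ n) (2 / (1 + √(1 - 4 * x))) := by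
  have hsum : Summable fun n ↦ (catalan n : ℝ) * x ^ n :=
    summable_of_sum_range_le (fun n ↦ by positivity) (sum_range_catalan_mul_pow_le_two hx₀ hx)
  set g := ∑' n, (catalan n : ℝ) * x ^ n with hg_def
  have hg : g ≤ 2 :=
    tsum_le_of_sum_range_le (fun n ↦ by positivity) (sum_range_catalan_mul_pow_le_two hx₀ hx)
  -- Catalan's recursion makes `g` a root of `x g² - g + 1`; the bound `g ≤ 2` picks the root.
  have hquad : x * (g * g) = g - 1 := by
    have hnorm : Summable fun n ↦ ‖(catalan n : ℝ) * x ^ n‖ := summable_norm_iff.mpr hsum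
    have hcauchy : g * g = ∑' n, (catalan (n + 1) : ℝ) * x ^ n := by
      rw [tsum_mul_tsum_eq_tsum_sum_antidiagonal_of_summable_norm hnorm hnorm]
      refine tsum_congr fun n ↦ ?_
      rw [catalan_succ', Nat.cast_sum, Finset.sum_mul]
      refine Finset.sum_congr rfl fun kl hkl ↦ ?_
      rw [Finset.HasAntidiagonal.mem_antidiagonal] at hkl
      rw [← hkl, pow_add]
      push_cast
      ring
    have hshift : ∑' n, x * ((catalan (n + 1) : ℝ) * x ^ n)
        = ∑' n, (catalan (n + 1) : ℝ) * x ^ (n + 1) :=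
      tsum_congr fun n ↦ by ring
    rw [hcauchy, ← tsum_mul_left, hshift, hg_def, hsum.tsum_eq_zero_add]
    simp
  have hroot : 1 - 2 * x * g = √(1 - 4 * x) := by
    have hsq : (1 - 2 * x * g) ^ 2 = √(1 - 4 * x) ^ 2 := by
      rw [Real.sq_sqrt (by linarith)]
      linear_combination 4 * x * hquad
    have : 0 ≤ 1 - 2 * x * g := by nlinarith
    exact (pow_left_inj₀ this (Real.sqrt_nonneg _) two_ne_zero).mp hsq
  convert hsum.hasSum using 1
  rw [div_eq_iff (by positivity), ← hroot]
  linear_combination 2 * hquad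

theorem catalan_mul_quarter_pow_le_two (n : ℕ) : (catalan n : ℝ) * (1 / 4) ^ n ≤ 2 := by
  have h := hasSum_catalan_mul_pow (x := 1 / 4) (by norm_num) le_rfl
  norm_num at h
  exact le_hasSum h n fun _ _ ↦ by positivity

theorem Gamma_nat_add_half_mul_Gamma_three_halves_div (n : ℕ) :
    Gamma ((n : ℝ) + 1 / 2) * Gamma (3 / 2) / Gamma ((n : ℝ) + 2)
      = π / 2 * (catalan n / 4 ^ n) := by
  induction n with
  | zero =>
    have h32 : Gamma (3 / 2) = Gamma (1 / 2) / 2 := by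
      rw [show (3 / 2 : ℝ) = 1 / 2 + 1 by norm_num, Gamma_add_one (by norm_num)]
      ring
    simp only [h32, CharP.cast_eq_zero, zero_add, Gamma_one_half_eq, Gamma_two, catalan_zero,
      Nat.cast_one, pow_zero, div_one, mul_one]
    rw [← mul_div_assoc, mul_self_sqrt pi_pos.le]
  | succ n ih =>
    have h : ((n : ℝ) + 2) * catalan (n + 1) = 2 * (2 * n + 1) * catalan n := by
      exact_mod_cast succ_succ_mul_catalan_succ n
    push_cast
    rw [show (n : ℝ) + 1 + 1 / 2 = n + 1 / 2 + 1 by ring, show (n : ℝ) + 1 + 2 = n + 2 + 1 by ring,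
      Gamma_add_one (by positivity), Gamma_add_one (by positivity), mul_assoc, mul_div_mul_comm,
      ih]
    field_simp
    rw [pow_succ]
    linear_combination (-2 * 4 ^ n : ℝ) * h

theorem pow_mul_sqrt_one_sub_div_self_eq_rpow {t : ℝ} (ht₀ : 0 ≤ t) (ht₁ : t ≤ 1) (n : ℕ) :
    t ^ n * √((1 - t) / t) = t ^ ((n : ℝ) - 1 / 2) * (1 - t) ^ (1 / 2 : ℝ) := by
  rcases ht₀.eq_or_lt with rfl | ht₀
  · have hn : (n : ℝ) - 1 / 2 ≠ 0 := fun h ↦ by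
      have : ((2 * n : ℕ) : ℝ) = 1 := by push_cast; linarith
      norm_cast at this
      omega
    rw [zero_rpow hn]
    simp
  · rw [sqrt_eq_rpow, div_rpow (sub_nonneg.2 ht₁) ht₀.le, rpow_sub ht₀, rpow_natCast]
    ring

theorem Complex.betaIntegral_nat_add_half_three_halves (n : ℕ) :
    Complex.betaIntegral ((n + 1 / 2 : ℝ) : ℂ) ((3 / 2 : ℝ) : ℂ)
      = ((∫ t in (0 : ℝ)..1, t ^ n * √((1 - t) / t) : ℝ) : ℂ) := by
  rw [Complex.betaIntegral, ← intervalIntegral.integral_ofReal]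
  refine intervalIntegral.integral_congr fun t ht ↦ ?_
  rw [Set.uIcc_of_le zero_le_one] at ht
  rw [pow_mul_sqrt_one_sub_div_self_eq_rpow ht.1 ht.2, Complex.ofReal_mul,
    Complex.ofReal_cpow ht.1, Complex.ofReal_cpow (sub_nonneg.2 ht.2)]
  push_cast
  ring_nf

theorem integral_pow_mul_sqrt_one_sub_div_self (n : ℕ) :
    ∫ t in (0 : ℝ)..1, t ^ n * √((1 - t) / t) = π / 2 * (catalan n / 4 ^ n) := by
  have h := Complex.betaIntegral_eq_Gamma_mul_div ((n + 1 / 2 : ℝ) : ℂ) ((3 / 2 : ℝ) : ℂ)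
    (by simp only [Complex.ofReal_re]; positivity) (by simp only [Complex.ofReal_re]; norm_num)
  rw [Complex.betaIntegral_nat_add_half_three_halves, ← Complex.ofReal_add,
    Complex.Gamma_ofReal, Complex.Gamma_ofReal, Complex.Gamma_ofReal] at h
  rw [show (n : ℝ) + 1 / 2 + 3 / 2 = n + 2 by ring] at h
  rw [← Gamma_nat_add_half_mul_Gamma_three_halves_div]
  exact_mod_cast h

theorem intervalIntegrable_pow_mul_sqrt_one_sub_div_self (n : ℕ) :
    IntervalIntegrable (fun t ↦ t ^ n * √((1 - t) / t)) volume 0 1 :=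
  -- a non-integrable function would have integral `0`
  intervalIntegral.intervalIntegrable_of_integral_ne_zero <| by
    rw [integral_pow_mul_sqrt_one_sub_div_self]
    have := catalan_pos n
    positivity

theorem HasSum.prod_fin_pi {β : Type*} {f : β → ℝ} {a : ℝ} (hf : HasSum f a) (hf₀ : 0 ≤ f)
    (s : ℕ) : HasSum (fun m : Fin s → β ↦ ∏ i, f (m i)) (a ^ s) := by
  induction s with
  | zero => simp [hasSum_unique]
  | succ s ih =>
    have hg₀ : 0 ≤ fun m : Fin s → β ↦ ∏ i, f (m i) := fun m ↦ Finset.prod_nonneg fun i _ ↦ hf₀ _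
    have hcons : (fun m : Fin (s + 1) → β ↦ ∏ i, f (m i)) ∘ Fin.consEquiv (fun _ ↦ β)
        = fun p ↦ f p.1 * ∏ i, f (p.2 i) := by
      ext p
      simp [Fin.prod_univ_succ, Fin.consEquiv]
    rw [← (Fin.consEquiv fun _ ↦ β).hasSum_iff, hcons, pow_succ']
    have hsum := hf.summable.mul_of_nonneg ih.summable hf₀ hg₀
    convert hf.mul ih hsum using 1

theorem intervalIntegral.tsum_integral_of_nonneg {ι : Type*} [Countable ι] {F : ι → ℝ → ℝ}
    {a b : ℝ} (hab : a ≤ b) (hF_int : ∀ i, IntervalIntegrable (F i) volume a b)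
    (hF_nonneg : ∀ i, ∀ t ∈ Set.Ioc a b, 0 ≤ F i t)
    (hF_sum : Summable fun i ↦ ∫ t in a..b, F i t) :
    ∑' i, ∫ t in a..b, F i t = ∫ t in a..b, ∑' i, F i t := by
  simp only [intervalIntegral.integral_of_le hab] at hF_sum ⊢
  refine integral_tsum_of_summable_integral_norm (fun i ↦ (hF_int i).1)
    (hF_sum.congr fun i ↦ setIntegral_congr_fun measurableSet_Ioc fun t ht ↦ ?_)
  exact (Real.norm_of_nonneg (hF_nonneg i t ht)).symm

section StarSum

variable {ι : Type*} [Fintype ι]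

theorem prod_catalan_mul_pow (m : ι → ℕ) (x : ℝ) :
    ∏ i, (catalan (m i) : ℝ) * x ^ m i = (∏ i, (catalan (m i) : ℝ)) * x ^ ∑ i, m i := by
  rw [Finset.prod_mul_distrib, Finset.prod_pow_eq_pow_sum]

theorem starSum_term_eq (m : ι → ℕ) :
    (∏ i, (catalan (m i) : ℝ)) * catalan (∑ i, m i) * ((16 : ℝ) ^ ∑ i, m i)⁻¹
      = (∏ i, (catalan (m i) : ℝ) * (1 / 4) ^ m i) * (catalan (∑ i, m i) * (1 / 4) ^ ∑ i, m i) := by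
  rw [prod_catalan_mul_pow, show (16 : ℝ) = (1 / 4 * (1 / 4))⁻¹ by norm_num, inv_pow, inv_inv,
    mul_pow]
  ring

theorem prod_catalan_mul_div_four_pow (m : ι → ℕ) (t : ℝ) :
    ∏ i, (catalan (m i) : ℝ) * (t / 4) ^ m i
      = (∏ i, (catalan (m i) : ℝ)) / 4 ^ (∑ i, m i) * t ^ ∑ i, m i := by
  rw [prod_catalan_mul_pow, div_pow]
  ring

theorem integral_prod_catalan_mul_pow_mul_sqrt (m : ι → ℕ) :
    ∫ t in (0 : ℝ)..1, (∏ i, (catalan (m i) : ℝ) * (t / 4) ^ m i) * √((1 - t) / t)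
      = π / 2 * ((∏ i, (catalan (m i) : ℝ)) * catalan (∑ i, m i) * ((16 : ℝ) ^ ∑ i, m i)⁻¹) := by
  simp_rw [prod_catalan_mul_div_four_pow, mul_assoc, intervalIntegral.integral_const_mul,
    integral_pow_mul_sqrt_one_sub_div_self, show (16 : ℝ) = 4 * 4 by norm_num, mul_pow]
  field_simp

theorem intervalIntegrable_prod_catalan_mul_pow_mul_sqrt (m : ι → ℕ) :
    IntervalIntegrable (fun t ↦ (∏ i, (catalan (m i) : ℝ) * (t / 4) ^ m i) * √((1 - t) / t))
      volume 0 1 := by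
  simp_rw [prod_catalan_mul_div_four_pow, mul_assoc]
  exact (intervalIntegrable_pow_mul_sqrt_one_sub_div_self _).const_mul _

end StarSum

theorem summable_starSum_term (s : ℕ) :
    Summable fun m : Fin s → ℕ ↦
      (∏ i, (catalan (m i) : ℝ)) * catalan (∑ i, m i) * ((16 : ℝ) ^ ∑ i, m i)⁻¹ := by
  have hprod := (hasSum_catalan_mul_pow (x := 1 / 4) (by norm_num) le_rfl).prod_fin_pi
    (fun n ↦ by positivity) s
  refine Summable.of_nonneg_of_le (fun m ↦ by positivity) (fun m ↦ ?_) (hprod.summable.mul_left 2)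
  rw [starSum_term_eq, mul_comm 2]
  gcongr
  exact catalan_mul_quarter_pow_le_two _

theorem tsum_prod_catalan_mul_pow {t : ℝ} (ht₀ : 0 ≤ t) (ht₁ : t ≤ 1) (s : ℕ) :
    ∑' m : Fin s → ℕ, ∏ i, (catalan (m i) : ℝ) * (t / 4) ^ m i = (2 / (1 + √(1 - t))) ^ s := by
  have h := (hasSum_catalan_mul_pow (x := t / 4) (by positivity) (by linarith)).prod_fin_pi
    (fun n ↦ by positivity) s
  rw [mul_div_cancel₀ t four_ne_zero] at h
  exact h.tsum_eq

theorem stmt_14_general (s : ℕ) :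
    starSum s =
      2 / π * ∫ t in (0 : ℝ)..1,
        Real.sqrt ((1 - t) / t) * (2 / (1 + Real.sqrt (1 - t))) ^ s := by
  calc starSum s
      = 2 / π * ∑' m : Fin s → ℕ,
          ∫ t in (0 : ℝ)..1, (∏ i, (catalan (m i) : ℝ) * (t / 4) ^ m i) * √((1 - t) / t) := by
        simp only [integral_prod_catalan_mul_pow_mul_sqrt, tsum_mul_left, starSum]
        field_simp
    _ = 2 / π * ∫ t in (0 : ℝ)..1,
          ∑' m : Fin s → ℕ, (∏ i, (catalan (m i) : ℝ) * (t / 4) ^ m i) * √((1 - t) / t) := by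
        rw [intervalIntegral.tsum_integral_of_nonneg zero_le_one
          intervalIntegrable_prod_catalan_mul_pow_mul_sqrt]
        · intro m t ht
          have ht₀ := ht.1.le
          exact mul_nonneg (Finset.prod_nonneg fun i _ ↦ by positivity) (sqrt_nonneg _)
        · simpa only [integral_prod_catalan_mul_pow_mul_sqrt] using
            (summable_starSum_term s).mul_left (π / 2)
    _ = 2 / π * ∫ t in (0 : ℝ)..1, √((1 - t) / t) * (2 / (1 + √(1 - t))) ^ s := by
        congr 1
        refine intervalIntegral.integral_congr fun t ht ↦ ?_
        rw [Set.uIcc_of_le zero_le_one] at ht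
        rw [tsum_mul_right, tsum_prod_catalan_mul_pow ht.1 ht.2, mul_comm]

/-- For `s ≥ 1`, `A_s = (2/π) ∫₀¹ √((1−t)/t) · (2/(1+√(1−t)))^s dt`. -/
theorem stmt_14 (s : ℕ) (hs : 1 ≤ s) :
    starSum s =
      2 / π * ∫ t in (0 : ℝ)..1,
        Real.sqrt ((1 - t) / t) * (2 / (1 + Real.sqrt (1 - t))) ^ s :=
  stmt_14_general s
end

section
/- For every integer s ≥ 0, one has A_{s+3} = (64/π) · ∑_{k=0}^{s} binom(s,k) / ((2k+1)(2k+3)(2k+5)), where A_s = ∑_{(m₁,…,m_s) ∈ ℕ^s} Cat_{m₁} ⋯ Cat_{m_s} · Cat_{m₁+⋯+m_s} · 16^{−(m₁+⋯+m_s)}. -/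
/-!
Wallis' integral `∫₀^{π/2} sin^{2N} θ cos² θ dθ = (π/4) Cat_N / 4^N` turns the factor
`Cat_N / 16^N` of each term into an integral, after which the sum over `m ∈ ℕ^r` factors
pointwise into the `r`-th power of the Catalan generating function
`C(t) = ∑ Cat_j t^j = 2 / (1 + √(1 - 4t))` at `t = sin² θ / 4`, i.e. into `(2 / (1 + cos θ))^r`.
Hence `A_r = (4/π) ∫₀^{π/2} cos² θ (2 / (1 + cos θ))^r dθ`, and the half-angle substitution
`θ = 2 arctan x` turns this, for `r = s + 3`, into the polynomial integral
`(8/π) ∫₀¹ (1 - x²)² (1 + x²)^s dx`, which is expanded with the binomial theorem.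
-/

open Real

open Finset Set

theorem sum_range_sum_antidiagonal_le_sq {R : Type*} [CommSemiring R] [PartialOrder R]
    [IsOrderedRing R] {a : ℕ → R} (ha : ∀ j, 0 ≤ a j) (n : ℕ) :
    ∑ m ∈ range n, ∑ p ∈ antidiagonal m, a p.1 * a p.2 ≤ (∑ j ∈ range n, a j) ^ 2 := by
  simp only [Nat.sum_antidiagonal_eq_sum_range_succ_mk]
  rw [sum_range_diag_flip n (fun i j => a i * a j), sq, sum_mul_sum]
  gcongr with i _
  · exact fun j _ _ => mul_nonneg (ha i) (ha j)
  · exact n.sub_le i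

theorem ENNReal.prod_univ_tsum {α : Type*} {r : ℕ} (f : Fin r → α → ENNReal) :
    ∏ i, ∑' a, f i a = ∑' x : Fin r → α, ∏ i, f i (x i) := by
  induction r with
  | zero => simp
  | succ r ih =>
    rw [← (Fin.consEquiv fun _ => α).tsum_eq, ENNReal.tsum_prod', Fin.prod_univ_succ, ih]
    simp only [Fin.consEquiv_apply, Fin.prod_univ_succ, Fin.cons_zero, Fin.cons_succ]
    simp_rw [ENNReal.tsum_mul_left, ENNReal.tsum_mul_right]

theorem ofReal_intervalIntegral_eq_setLIntegral {f : ℝ → ℝ} {a b : ℝ} (hab : a ≤ b)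
    (hf : IntervalIntegrable f MeasureTheory.volume a b) (hf₀ : ∀ x ∈ Ioc a b, 0 ≤ f x) :
    ENNReal.ofReal (∫ x in a..b, f x) = ∫⁻ x in Ioc a b, ENNReal.ofReal (f x) := by
  rw [intervalIntegral.integral_of_le hab]
  exact MeasureTheory.ofReal_integral_eq_lintegral_ofReal hf.1
    ((MeasureTheory.ae_restrict_iff' measurableSet_Ioc).mpr (.of_forall hf₀))

-- `(1 - √(1 - 4t)) / (2t)` with the numerator rationalized, so that no case `t = 0` is needed.
noncomputable def catalanGF (t : ℝ) : ℝ := 2 / (1 + √(1 - 4 * t))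

theorem catalanGF_nonneg (t : ℝ) : 0 ≤ catalanGF t := by
  unfold catalanGF; positivity

theorem catalanGF_eq_one_add_mul_sq {t : ℝ} (ht : 4 * t ≤ 1) :
    catalanGF t = 1 + t * catalanGF t ^ 2 := by
  have hd : √(1 - 4 * t) ^ 2 = 1 - 4 * t := sq_sqrt (by linarith)
  have : 1 + √(1 - 4 * t) ≠ 0 := by positivity
  unfold catalanGF
  field_simp
  linear_combination -hd

theorem catalanGF_sin_sq_div_four {θ : ℝ} (hθ : 0 ≤ cos θ) :
    catalanGF (sin θ ^ 2 / 4) = 2 / (1 + cos θ) := by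
  rw [catalanGF, mul_div_cancel₀ _ four_ne_zero, ← cos_sq', sqrt_sq hθ]

theorem catalan_succ_mul_pow (t : ℝ) (m : ℕ) :
    (catalan (m + 1) : ℝ) * t ^ (m + 1) =
      t * ∑ p ∈ antidiagonal m, (catalan p.1 * t ^ p.1) * (catalan p.2 * t ^ p.2) := by
  rw [catalan_succ', Nat.cast_sum, sum_mul, mul_sum]
  refine sum_congr rfl fun p hp => ?_
  rw [← mem_antidiagonal.mp hp]
  push_cast
  ring

theorem sum_range_succ_catalan_mul_pow_le {t : ℝ} (ht : 0 ≤ t) (n : ℕ) :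
    ∑ j ∈ range (n + 1), (catalan j : ℝ) * t ^ j ≤
      1 + t * (∑ j ∈ range n, (catalan j : ℝ) * t ^ j) ^ 2 := by
  rw [sum_range_succ', catalan_zero, Nat.cast_one, pow_zero, one_mul, add_comm]
  simp_rw [catalan_succ_mul_pow, ← mul_sum]
  gcongr
  exact sum_range_sum_antidiagonal_le_sq (a := fun j => (catalan j : ℝ) * t ^ j)
    (fun j => by positivity) n

theorem sum_range_catalan_mul_pow_le_catalanGF {t : ℝ} (h₀ : 0 ≤ t) (h₁ : 4 * t ≤ 1) (n : ℕ) :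
    ∑ j ∈ range n, (catalan j : ℝ) * t ^ j ≤ catalanGF t := by
  induction n with
  | zero => simpa using catalanGF_nonneg t
  | succ n ih =>
    have hP : 0 ≤ ∑ j ∈ range n, (catalan j : ℝ) * t ^ j := sum_nonneg fun j _ => by positivity
    calc ∑ j ∈ range (n + 1), (catalan j : ℝ) * t ^ j
        ≤ 1 + t * (∑ j ∈ range n, (catalan j : ℝ) * t ^ j) ^ 2 :=
          sum_range_succ_catalan_mul_pow_le h₀ n
      _ ≤ 1 + t * catalanGF t ^ 2 := by gcongr
      _ = catalanGF t := (catalanGF_eq_one_add_mul_sq h₁).symm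

theorem hasSum_catalan_mul_pow_s15 {t : ℝ} (h₀ : 0 ≤ t) (h₁ : 4 * t ≤ 1) :
    HasSum (fun j => (catalan j : ℝ) * t ^ j) (catalanGF t) := by
  set a : ℕ → ℝ := fun j => catalan j * t ^ j
  have ha : ∀ j, 0 ≤ a j := fun j => by positivity
  have hsum : Summable a :=
    summable_of_sum_range_le ha (sum_range_catalan_mul_pow_le_catalanGF h₀ h₁)
  set S := ∑' j, a j
  have hS : S ≤ catalanGF t :=
    Real.tsum_le_of_sum_range_le ha (sum_range_catalan_mul_pow_le_catalanGF h₀ h₁)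
  have hquad : S = 1 + t * S ^ 2 := by
    have hmul : S ^ 2 = ∑' n, ∑ p ∈ antidiagonal n, a p.1 * a p.2 := by
      rw [sq]
      exact tsum_mul_tsum_eq_tsum_sum_antidiagonal_of_summable_norm
        (summable_norm_iff.mpr hsum) (summable_norm_iff.mpr hsum)
    rw [hmul, ← tsum_mul_left, ← funext (catalan_succ_mul_pow t)]
    simpa [a] using hsum.tsum_eq_zero_add
  -- `S` and `catalanGF t` both solve `X = 1 + t X²`; the other root exceeds `catalanGF t ≥ S`.
  have htg : 2 * t * catalanGF t ≤ 1 := by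
    unfold catalanGF
    rw [mul_div_assoc', div_le_one (by positivity)]
    nlinarith [sqrt_nonneg (1 - 4 * t)]
  have hfac : (S - catalanGF t) * (t * (S + catalanGF t) - 1) = 0 := by
    linear_combination catalanGF_eq_one_add_mul_sq h₁ - hquad
  convert hsum.hasSum using 1
  refine le_antisymm (not_lt.mp fun hlt => ?_) hS
  have hroot : t * (S + catalanGF t) = 1 := by
    linarith [(mul_eq_zero.mp hfac).resolve_left (sub_ne_zero.mpr hlt.ne)]
  have ht : 0 < t := h₀.lt_of_ne fun h => by simp [← h] at hroot
  nlinarith [mul_lt_mul_of_pos_left hlt ht]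

theorem tsum_ofReal_prod_catalan_mul_pow {t : ℝ} (h₀ : 0 ≤ t) (h₁ : 4 * t ≤ 1) (r : ℕ) :
    ∑' m : Fin r → ℕ, ENNReal.ofReal (∏ i, (catalan (m i) : ℝ) * t ^ m i) =
      ENNReal.ofReal (catalanGF t ^ r) := by
  have hterm (j : ℕ) : 0 ≤ (catalan j : ℝ) * t ^ j := by positivity
  have hGF := hasSum_catalan_mul_pow_s15 h₀ h₁
  calc ∑' m : Fin r → ℕ, ENNReal.ofReal (∏ i, (catalan (m i) : ℝ) * t ^ m i)
      = ∑' m : Fin r → ℕ, ∏ i, ENNReal.ofReal ((catalan (m i) : ℝ) * t ^ m i) :=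
        tsum_congr fun m => ENNReal.ofReal_prod_of_nonneg fun i _ => hterm (m i)
    _ = (∑' j, ENNReal.ofReal ((catalan j : ℝ) * t ^ j)) ^ r := by
        rw [← ENNReal.prod_univ_tsum fun _ j => ENNReal.ofReal ((catalan j : ℝ) * t ^ j),
          prod_const, card_univ, Fintype.card_fin]
    _ = ENNReal.ofReal (catalanGF t ^ r) := by
        rw [← ENNReal.ofReal_tsum_of_nonneg hterm hGF.summable, hGF.tsum_eq,
          ENNReal.ofReal_pow (catalanGF_nonneg t)]

theorem integral_sin_pow_add_two_zero_pi_div_two (n : ℕ) :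
    ∫ x in 0..π / 2, sin x ^ (n + 2) = (n + 1) / (n + 2) * ∫ x in 0..π / 2, sin x ^ n := by
  rw [integral_sin_pow]
  simp

theorem integral_sin_pow_even_zero_pi_div_two (n : ℕ) :
    ∫ x in 0..π / 2, sin x ^ (2 * n) = π / 2 * n.centralBinom / 4 ^ n := by
  induction n with
  | zero => simp
  | succ n ih =>
    have hrec : ((n : ℝ) + 1) * (n + 1).centralBinom = 2 * (2 * n + 1) * n.centralBinom := by
      exact_mod_cast Nat.succ_mul_centralBinom_succ n
    rw [mul_add, mul_one, integral_sin_pow_add_two_zero_pi_div_two, ih]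
    field_simp
    push_cast
    linear_combination (-2 * 4 ^ n : ℝ) * hrec

theorem integral_sin_pow_even_mul_cos_sq (n : ℕ) :
    ∫ x in 0..π / 2, sin x ^ (2 * n) * cos x ^ 2 = π / 4 * catalan n / 4 ^ n := by
  have hcat : ((n : ℝ) + 1) * catalan n = n.centralBinom := by
    exact_mod_cast succ_mul_catalan_eq_centralBinom n
  have hsplit (x : ℝ) : sin x ^ (2 * n) * cos x ^ 2 = sin x ^ (2 * n) - sin x ^ (2 * n + 2) := by
    rw [cos_sq', pow_add]; ring
  simp_rw [hsplit]
  rw [intervalIntegral.integral_sub (by apply Continuous.intervalIntegrable; fun_prop)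
      (by apply Continuous.intervalIntegrable; fun_prop),
    integral_sin_pow_add_two_zero_pi_div_two, integral_sin_pow_even_zero_pi_div_two, ← hcat]
  field_simp
  push_cast
  ring

theorem mul_starSum_term_eq_integral {r : ℕ} (m : Fin r → ℕ) :
    π / 4 * ((∏ i, (catalan (m i) : ℝ)) * catalan (∑ i, m i) * ((16 : ℝ) ^ ∑ i, m i)⁻¹) =
      ∫ θ in 0..π / 2, cos θ ^ 2 * ∏ i, (catalan (m i) : ℝ) * (sin θ ^ 2 / 4) ^ m i := by
  have hprod (θ : ℝ) : ∏ i, (catalan (m i) : ℝ) * (sin θ ^ 2 / 4) ^ m i =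
      (∏ i, (catalan (m i) : ℝ)) / 4 ^ (∑ i, m i) * sin θ ^ (2 * ∑ i, m i) := by
    rw [prod_mul_distrib, prod_pow_eq_pow_sum, div_pow, pow_mul]
    ring
  simp_rw [hprod, mul_left_comm (cos _ ^ 2), intervalIntegral.integral_const_mul,
    mul_comm (cos _ ^ 2), integral_sin_pow_even_mul_cos_sq]
  rw [show (16 : ℝ) = 4 * 4 by norm_num, mul_pow]
  field_simp

theorem continuousOn_cos_sq_mul_two_div_one_add_cos_pow (r : ℕ) :
    ContinuousOn (fun θ => cos θ ^ 2 * (2 / (1 + cos θ)) ^ r) (Icc 0 (π / 2)) := by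
  have : ∀ θ ∈ Icc 0 (π / 2), 1 + cos θ ≠ 0 := fun θ hθ => by
    linarith [cos_nonneg_of_mem_Icc ⟨by linarith [pi_pos, hθ.1], hθ.2⟩]
  fun_prop (disch := assumption)

theorem cos_sq_mul_two_div_one_add_cos_pow_nonneg (r : ℕ) (θ : ℝ) :
    0 ≤ cos θ ^ 2 * (2 / (1 + cos θ)) ^ r := by
  have : 0 ≤ 1 + cos θ := by linarith [neg_one_le_cos θ]
  positivity

theorem tsum_ofReal_cos_sq_mul_prod_catalan {θ : ℝ} (hθ : 0 ≤ cos θ) (r : ℕ) :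
    ∑' m : Fin r → ℕ,
        ENNReal.ofReal (cos θ ^ 2 * ∏ i, (catalan (m i) : ℝ) * (sin θ ^ 2 / 4) ^ m i) =
      ENNReal.ofReal (cos θ ^ 2 * (2 / (1 + cos θ)) ^ r) := by
  have h₁ : 4 * (sin θ ^ 2 / 4) ≤ 1 := by nlinarith [sin_sq_le_one θ]
  simp_rw [ENNReal.ofReal_mul (sq_nonneg _), ENNReal.tsum_mul_left,
    tsum_ofReal_prod_catalan_mul_pow (by positivity) h₁, catalanGF_sin_sq_div_four hθ]

theorem ofReal_pi_div_four_mul_tsum_starSum_term (r : ℕ) :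
    ENNReal.ofReal (π / 4) * ∑' m : Fin r → ℕ, ENNReal.ofReal
        ((∏ i, (catalan (m i) : ℝ)) * catalan (∑ i, m i) * ((16 : ℝ) ^ ∑ i, m i)⁻¹) =
      ENNReal.ofReal (∫ θ in 0..π / 2, cos θ ^ 2 * (2 / (1 + cos θ)) ^ r) := by
  set F : (Fin r → ℕ) → ℝ → ℝ := fun m θ =>
    cos θ ^ 2 * ∏ i, (catalan (m i) : ℝ) * (sin θ ^ 2 / 4) ^ m i
  have hF (m) : Continuous (F m) := by fun_prop
  calc _ = ∑' m, ENNReal.ofReal (∫ θ in 0..π / 2, F m θ) := by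
          simp_rw [← ENNReal.tsum_mul_left, ← ENNReal.ofReal_mul (by positivity : 0 ≤ π / 4),
            mul_starSum_term_eq_integral]
          rfl
    _ = ∑' m, ∫⁻ θ in Ioc 0 (π / 2), ENNReal.ofReal (F m θ) :=
          tsum_congr fun m => ofReal_intervalIntegral_eq_setLIntegral pi_div_two_pos.le
            ((hF m).intervalIntegrable _ _) fun θ _ => by positivity
    _ = ∫⁻ θ in Ioc 0 (π / 2), ENNReal.ofReal (cos θ ^ 2 * (2 / (1 + cos θ)) ^ r) := by
          rw [← MeasureTheory.lintegral_tsum fun m =>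
            (hF m).measurable.ennreal_ofReal.aemeasurable]
          refine MeasureTheory.setLIntegral_congr_fun measurableSet_Ioc fun θ hθ => ?_
          exact tsum_ofReal_cos_sq_mul_prod_catalan
            (cos_nonneg_of_mem_Icc ⟨by linarith [pi_pos, hθ.1], hθ.2⟩) r
    _ = _ := by
          refine (ofReal_intervalIntegral_eq_setLIntegral pi_div_two_pos.le ?_
            fun θ _ => cos_sq_mul_two_div_one_add_cos_pow_nonneg r θ).symm
          refine ContinuousOn.intervalIntegrable ?_
          rw [uIcc_of_le pi_div_two_pos.le]
          exact continuousOn_cos_sq_mul_two_div_one_add_cos_pow r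

theorem starSum_eq_integral (r : ℕ) :
    starSum r = 4 / π * ∫ θ in 0..π / 2, cos θ ^ 2 * (2 / (1 + cos θ)) ^ r := by
  have hstar : starSum r = (∑' m : Fin r → ℕ, ENNReal.ofReal
      ((∏ i, (catalan (m i) : ℝ)) * catalan (∑ i, m i) * ((16 : ℝ) ^ ∑ i, m i)⁻¹)).toReal := by
    rw [ENNReal.tsum_toReal_eq fun m => ENNReal.ofReal_ne_top]
    exact tsum_congr fun m => (ENNReal.toReal_ofReal (by positivity)).symm
  have h := congrArg ENNReal.toReal (ofReal_pi_div_four_mul_tsum_starSum_term r)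
  rw [ENNReal.toReal_mul, ← hstar, ENNReal.toReal_ofReal (by positivity : 0 ≤ π / 4),
    ENNReal.toReal_ofReal (intervalIntegral.integral_nonneg pi_div_two_pos.le
      fun θ _ => cos_sq_mul_two_div_one_add_cos_pow_nonneg r θ)] at h
  rw [← h]
  field_simp

theorem cos_two_mul_arctan (x : ℝ) : cos (2 * arctan x) = (1 - x ^ 2) / (1 + x ^ 2) := by
  rw [cos_two_mul, cos_sq_arctan]
  field_simp
  ring

theorem integral_comp_two_mul_arctan {f : ℝ → ℝ} (hf : ContinuousOn f (Icc 0 (π / 2))) :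
    ∫ x in (0 : ℝ)..1, f (2 * arctan x) * (2 / (1 + x ^ 2)) = ∫ θ in 0..π / 2, f θ := by
  have hderiv (x : ℝ) : HasDerivAt (fun x => 2 * arctan x) (2 / (1 + x ^ 2)) x := by
    simpa [div_eq_mul_inv] using (hasDerivAt_arctan x).const_mul (2 : ℝ)
  have hmaps : (fun x => 2 * arctan x) '' uIcc 0 1 ⊆ Icc 0 (π / 2) := by
    rintro _ ⟨x, hx, rfl⟩
    rw [Set.uIcc_of_le zero_le_one] at hx
    have h₀ : arctan 0 ≤ arctan x := arctan_strictMono.monotone hx.1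
    have h₁ : arctan x ≤ arctan 1 := arctan_strictMono.monotone hx.2
    rw [arctan_zero] at h₀
    rw [arctan_one] at h₁
    constructor <;> linarith
  have := intervalIntegral.integral_comp_mul_deriv' (fun x _ => hderiv x)
    (by fun_prop (disch := intros; positivity)) (hf.mono hmaps)
  rwa [arctan_zero, arctan_one, mul_zero, show 2 * (π / 4) = π / 2 by ring] at this

theorem integral_cos_sq_mul_two_div_one_add_cos_pow (s : ℕ) :
    ∫ θ in 0..π / 2, cos θ ^ 2 * (2 / (1 + cos θ)) ^ (s + 3) =
      2 * ∫ x in (0 : ℝ)..1, (1 - x ^ 2) ^ 2 * (1 + x ^ 2) ^ s := by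
  rw [← integral_comp_two_mul_arctan (continuousOn_cos_sq_mul_two_div_one_add_cos_pow _),
    ← intervalIntegral.integral_const_mul]
  refine intervalIntegral.integral_congr fun x _ => ?_
  have : 0 < 1 + x ^ 2 := by positivity
  simp only [cos_two_mul_arctan]
  field_simp
  ring

theorem integral_one_sub_sq_sq_mul_pow_two_mul (k : ℕ) :
    ∫ x in (0 : ℝ)..1, (1 - x ^ 2) ^ 2 * x ^ (2 * k) =
      8 / ((2 * (k : ℝ) + 1) * (2 * k + 3) * (2 * k + 5)) := by
  have hexpand (x : ℝ) : (1 - x ^ 2) ^ 2 * x ^ (2 * k) =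
      x ^ (2 * k) - 2 * x ^ (2 * k + 2) + x ^ (2 * k + 4) := by
    ring
  simp_rw [hexpand]
  rw [intervalIntegral.integral_add, intervalIntegral.integral_sub,
    intervalIntegral.integral_const_mul]
  · simp only [integral_pow]
    push_cast
    field_simp
    ring
  all_goals apply Continuous.intervalIntegrable; fun_prop

theorem integral_one_sub_sq_sq_mul_one_add_sq_pow (s : ℕ) :
    ∫ x in (0 : ℝ)..1, (1 - x ^ 2) ^ 2 * (1 + x ^ 2) ^ s =
      ∑ k ∈ range (s + 1), (s.choose k : ℝ) * (8 / ((2 * k + 1) * (2 * k + 3) * (2 * k + 5))) := by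
  have hbinom (x : ℝ) : (1 - x ^ 2) ^ 2 * (1 + x ^ 2) ^ s =
      ∑ k ∈ range (s + 1), (s.choose k : ℝ) * ((1 - x ^ 2) ^ 2 * x ^ (2 * k)) := by
    rw [add_comm, add_pow, mul_sum]
    refine sum_congr rfl fun k _ => ?_
    rw [one_pow, mul_one, pow_mul]
    ring
  simp_rw [hbinom]
  rw [intervalIntegral.integral_finsetSum fun k _ => by
    apply Continuous.intervalIntegrable; fun_prop]
  simp_rw [intervalIntegral.integral_const_mul, integral_one_sub_sq_sq_mul_pow_two_mul]

/-- For `s ≥ 0`, `A_{s+3} = (64/π) ∑_{k=0}^s binom(s,k)/((2k+1)(2k+3)(2k+5))`. -/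
theorem stmt_15 (s : ℕ) :
    starSum (s + 3) =
      64 / π * ∑ k ∈ Finset.range (s + 1),
        (s.choose k : ℝ) / ((2 * (k : ℝ) + 1) * (2 * (k : ℝ) + 3) * (2 * (k : ℝ) + 5)) := by
  rw [starSum_eq_integral, integral_cos_sq_mul_two_div_one_add_cos_pow,
    integral_one_sub_sq_sq_mul_one_add_sq_pow, mul_sum, mul_sum, mul_sum]
  refine sum_congr rfl fun k _ => ?_
  ring
end
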